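/- arXiv:2507.12831 — 2 statements merged into one kernel-verified Lean document; each statement's English description precedes it below -/
import Mathlib

section
/- Let G = (V,E) be a hypergraph with G = cl(G), and let C = e_1, e_2, e_3, e_1 be an α-cycle of G satisfying e_1 \ (e_2 ∪ e_3) = ∅, e_2 \ (e_1 ∪ e_3) = ∅, and e_3 \ (e_1 ∪ e_2) = ∅. Let G_C = (V_C, E_C) be the support hypergraph of C, where V_C = e_1 ∪ e_2 ∪ e_3 and E_C = { e : e ⊆ e_i for some i ∈ {1,2,3}, |e| ≥ 2 }. Then the inequality z_{e_1} + z_{e_2} ≤ z_{e_1∩e_2} + z_{e_3} defines a facet of MP(G_C): it is valid for MP(G_C), and the face { z ∈ MP(G_C) : z_{e_1} + z_{e_2} = z_{e_1∩e_2} + z_{e_3} } has affine dimension |V_C| + |E_C| − 1. -/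
open Finset

namespace BPO

variable {N : Type*} [DecidableEq N]

/-- Coordinate index set of `ℝ^{V ∪ E}`: one coordinate for each edge, and one
coordinate (labelled by the corresponding singleton) for each node. -/
def coords (V : Finset N) (E : Finset (Finset N)) : Finset (Finset N) :=
  E ∪ V.image fun v => {v}

/-- A point of `ℝ^{V ∪ E}`. -/
abbrev Pt (V : Finset N) (E : Finset (Finset N)) : Type _ :=
  {p : Finset N // p ∈ coords V E} → ℝ

/-- Evaluate a coordinate of a point, with the convention `z_∅ = 1`.
For a node `v`, the coordinate `z_v` is `ev z {v}`. -/
noncomputable def ev {V : Finset N} {E : Finset (Finset N)} (z : Pt V E)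
    (p : Finset N) : ℝ :=
  if h : p ∈ coords V E then z ⟨p, h⟩ else if p = ∅ then 1 else 0

/-- The multilinear set `S(G)`: binary points with `z_e = ∏_{v ∈ e} z_v`. -/
def mlSet (V : Finset N) (E : Finset (Finset N)) : Set (Pt V E) :=
  { z | (∀ p, z p = 0 ∨ z p = 1) ∧ ∀ e ∈ E, ev z e = ∏ v ∈ e, ev z {v} }

/-- The multilinear polytope `MP(G)`. -/
noncomputable def MP (V : Finset N) (E : Finset (Finset N)) : Set (Pt V E) :=
  convexHull ℝ (mlSet V E)

/-- The completion `cl(E) = { f ⊆ e : |f| ≥ 2, e ∈ E }`. -/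
def clE (E : Finset (Finset N)) : Finset (Finset N) :=
  (E.biUnion Finset.powerset).filter fun g => 2 ≤ g.card

/-- The set of maximal edges of `E`. -/
def maxEdges (E : Finset (Finset N)) : Finset (Finset N) :=
  E.filter fun e => ∀ e' ∈ E, e ⊆ e' → e = e'

/-- The linear function `ψ(U, e)`. -/
noncomputable def psi {V : Finset N} {E : Finset (Finset N)} (z : Pt V E)
    (U e : Finset N) : ℝ :=
  ∑ W ∈ U.powerset, (if Even W.card then (1 : ℝ) else -1) * ev z ((e \ U) ∪ W)

/-- The complete edge relaxation constraints (`ψ(U,e) ≥ 0` for `U ⊆ e`, `e` a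
maximal edge of `E`), imposed on the coordinate space `ℝ^{V ∪ F}`. -/
noncomputable def cerSet (V : Finset N) (E F : Finset (Finset N)) : Set (Pt V F) :=
  { z | ∀ e ∈ maxEdges E, ∀ U ⊆ e, 0 ≤ psi z U e }

/-- The complete edge relaxation `CER(G) ⊆ ℝ^{V ∪ cl(E)}`. -/
noncomputable def CER (V : Finset N) (E : Finset (Finset N)) : Set (Pt V (clE E)) :=
  cerSet V E (clE E)

/-- Projection onto the coordinates of `ℝ^{V₂ ∪ E₂}`. -/
noncomputable def res (V₂ : Finset N) (E₂ : Finset (Finset N)) {V₁ : Finset N}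
    {E₁ : Finset (Finset N)} (z : Pt V₁ E₁) : Pt V₂ E₂ :=
  fun p => ev z p.1

/-- `CER(G)` is an extension of `MP(G)`: `MP(G)` is the image of `CER(G)` under
the projection of `ℝ^{V ∪ cl(E)}` onto `ℝ^{V ∪ E}`. -/
def IsExtension (V : Finset N) (E : Finset (Finset N)) : Prop :=
  MP V E = (fun z : Pt V (clE E) => res V E z) '' CER V E

/-- The running intersection property for the family `E`. -/
def RunningIntersection (E : Finset (Finset N)) : Prop :=
  ∃ L : List (Finset N), L.Nodup ∧ L.toFinset = E ∧
    ∀ k, 0 < k → k < L.length →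
      ∃ j < k, L.getD k ∅ ∩ (L.take k).foldr (· ∪ ·) ∅ ⊆ L.getD j ∅

/-- A hypergraph is α-acyclic if its edge set has the running intersection property. -/
def AlphaAcyclic (E : Finset (Finset N)) : Prop := RunningIntersection E

/-- `s_i = e_i ∩ e_{i+1}` for a cyclic sequence `e_1, …, e_ℓ, e_{ℓ+1} = e_1`. -/
def cycS (c : ℕ → Finset N) (ℓ i : ℕ) : Finset N :=
  c i ∩ c (if i = ℓ then 1 else i + 1)

/-- A simple cycle `e_1, …, e_ℓ, e_{ℓ+1} = e_1` of length `ℓ`. -/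
def IsSimpleCycle (E : Finset (Finset N)) (ℓ : ℕ) (c : ℕ → Finset N) : Prop :=
  3 ≤ ℓ ∧ (∀ i, 1 ≤ i → i ≤ ℓ → c i ∈ E) ∧
    ∀ i j k, 1 ≤ i → i < j → j < k → k ≤ ℓ → ∀ e ∈ E,
      ((cycS c ℓ i ∪ cycS c ℓ j ∪ cycS c ℓ k) \ e).Nonempty

/-- An α-cycle `e_1, …, e_ℓ, e_{ℓ+1} = e_1` of length `ℓ`. -/
def IsAlphaCycle (E : Finset (Finset N)) (ℓ : ℕ) (c : ℕ → Finset N) : Prop :=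
  3 ≤ ℓ ∧ (∀ i, 1 ≤ i → i ≤ ℓ → c i ∈ E) ∧
    (∀ i j, 1 ≤ i → i ≤ ℓ → 1 ≤ j → j ≤ ℓ → i ≠ j → (c i \ c j).Nonempty) ∧
    ∀ i, 1 ≤ i → i ≤ ℓ → ∀ e ∈ E,
      ((cycS c ℓ (if i = 1 then ℓ else i - 1) ∪ cycS c ℓ i ∪
        cycS c ℓ (if i = ℓ then 1 else i + 1)) \ e).Nonempty

/-- A chordless α-cycle: no subsequence `e_i, …, e_j, ẽ, e_i` is an α-cycle. -/
def Chordless (E : Finset (Finset N)) (ℓ : ℕ) (c : ℕ → Finset N) : Prop :=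
  ∀ i j, 1 ≤ i → i < j → j ≤ ℓ → j - i ≤ ℓ - 3 →
    ∀ g ∈ E, (∀ k, i ≤ k → k ≤ j → g ≠ c k) →
      ¬ IsAlphaCycle E (j - i + 2) fun k => if k ≤ j - i + 1 then c (i + k - 1) else g

/-- The edge set `E_{V'}` of the subhypergraph induced by `W`. -/
def indE (E : Finset (Finset N)) (W : Finset N) : Finset (Finset N) :=
  (E.image fun e => e ∩ W).filter fun g => 2 ≤ g.card

/-- The edge set `E_{w→u}` obtained by contracting `w` to `u`. -/
def contrE (E : Finset (Finset N)) (u w : N) : Finset (Finset N) :=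
  E.filter (fun e => w ∉ e) ∪
    (E.filter fun e => w ∈ e ∧ e ≠ {u, w}).image fun e => e.erase w ∪ {u}

/-- The edge set `E'` obtained by expanding `w` to `f`. -/
def expE (E : Finset (Finset N)) (w : N) (f : Finset N) : Finset (Finset N) :=
  insert f
    (E.filter (fun e => w ∉ e) ∪ (E.filter fun e => w ∈ e).image fun e => e.erase w ∪ f)

/-- The coordinate renaming `x_w → z_f`, `x_v → z_v`, `x_e → z_e` (`w ∉ e`),
`x_e → z_{(e∖{w}) ⊎ f}` (`w ∈ e`) used in the expansion operation. -/
def expRen (w : N) (f : Finset N) (p : Finset N) : Finset N :=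
  if p = {w} then f else if w ∈ p then p.erase w ∪ f else p

section FacetAux

variable {N : Type*} [DecidableEq N]

lemma triInd {ι : Type*} [DecidableEq ι] {M : Type*} [AddCommGroup M] [Module ℝ M]
    (v : ι → M) (φ : ι → M →ₗ[ℝ] ℝ) (r : ι → ℕ)
    (hd : ∀ i, φ i (v i) ≠ 0)
    (ho : ∀ i j, j ≠ i → r j ≤ r i → φ i (v j) = 0) :
    LinearIndependent ℝ v := by
  rw [linearIndependent_iff']
  intro s g hsum
  suffices H : ∀ n i, i ∈ s → (s.filter (fun j => r i < r j)).card ≤ n → g i = 0 by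
    intro i hi; exact H _ i hi le_rfl
  intro n
  induction n using Nat.strong_induction_on with
  | _ n ih =>
    intro i hi hcard
    have hz : ∀ j ∈ s, j ≠ i → g j * φ i (v j) = 0 := by
      intro j hj hne
      by_cases hr : r j ≤ r i
      · rw [ho i j hne hr, mul_zero]
      · push_neg at hr
        have hji : j ∈ s.filter (fun k => r i < r k) := mem_filter.2 ⟨hj, hr⟩
        have hsub : s.filter (fun k => r j < r k) ⊆
            (s.filter (fun k => r i < r k)).erase j := by
          intro k hk
          rw [mem_filter] at hk
          refine mem_erase.2 ⟨?_, mem_filter.2 ⟨hk.1, hr.trans hk.2⟩⟩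
          rintro rfl; exact lt_irrefl _ hk.2
        have hlt : (s.filter (fun k => r j < r k)).card <
            (s.filter (fun k => r i < r k)).card := by
          calc (s.filter (fun k => r j < r k)).card
              ≤ ((s.filter (fun k => r i < r k)).erase j).card := card_le_card hsub
            _ < (s.filter (fun k => r i < r k)).card := card_erase_lt_of_mem hji
        rw [ih _ (lt_of_lt_of_le hlt hcard) j hj le_rfl, zero_mul]
    have happ : ∑ j ∈ s, g j * φ i (v j) = 0 := by
      have := congrArg (φ i) hsum
      rw [map_sum, map_zero] at this
      simpa [map_smul, smul_eq_mul] using this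
    rw [Finset.sum_eq_single i (fun j hj hne => hz j hj hne) (fun h => absurd hi h)] at happ
    exact (mul_eq_zero.1 happ).resolve_right (hd i)

lemma mem_clE3 {e1 e2 e3 q : Finset N} :
    q ∈ clE {e1, e2, e3} ↔ 2 ≤ q.card ∧ (q ⊆ e1 ∨ q ⊆ e2 ∨ q ⊆ e3) := by
  simp only [clE, mem_filter, mem_biUnion, mem_insert, mem_singleton, mem_powerset]
  constructor
  · rintro ⟨⟨e, he, hqe⟩, hc⟩
    refine ⟨hc, ?_⟩
    rcases he with rfl | rfl | rfl
    · exact Or.inl hqe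
    · exact Or.inr (Or.inl hqe)
    · exact Or.inr (Or.inr hqe)
  · rintro ⟨hc, h⟩
    refine ⟨?_, hc⟩
    rcases h with h | h | h
    · exact ⟨e1, Or.inl rfl, h⟩
    · exact ⟨e2, Or.inr (Or.inl rfl), h⟩
    · exact ⟨e3, Or.inr (Or.inr rfl), h⟩

lemma mem_coords_iff {V : Finset N} {E : Finset (Finset N)} {p : Finset N} :
    p ∈ coords V E ↔ p ∈ E ∨ ∃ v ∈ V, p = {v} := by
  simp [coords, eq_comm]

/-- The 0/1 point of `ℝ^{V∪E}` with support `S`. -/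
noncomputable def zeta (V : Finset N) (E : Finset (Finset N)) (S : Finset N) :
    Pt V E :=
  fun p => if p.1 ⊆ S then 1 else 0

lemma ev_zeta {V : Finset N} {E : Finset (Finset N)} (S : Finset N) {p : Finset N}
    (h : p ∈ coords V E) :
    ev (zeta V E S) p = if p ⊆ S then 1 else 0 := by
  rw [ev, dif_pos h]; rfl

lemma zeta_mem_mlSet {V : Finset N} {E : Finset (Finset N)} (hEV : ∀ e ∈ E, e ⊆ V)
    (S : Finset N) : zeta V E S ∈ mlSet V E := by
  constructor
  · intro p
    by_cases h : p.1 ⊆ S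
    · right; simp [zeta, h]
    · left; simp [zeta, h]
  · intro e he
    rw [ev_zeta S (mem_coords_iff.2 (Or.inl he))]
    have hstep : ∀ v ∈ e, ev (zeta V E S) {v} = if v ∈ S then 1 else 0 := by
      intro v hv
      rw [ev_zeta S (mem_coords_iff.2 (Or.inr ⟨v, hEV e he hv, rfl⟩))]
      simp [Finset.singleton_subset_iff]
    rw [Finset.prod_congr rfl hstep, Finset.prod_boole]
    rfl

lemma ev_combo {V : Finset N} {E : Finset (Finset N)} (z w : Pt V E)
    {a b : ℝ} (hab : a + b = 1) (p : Finset N) :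
    ev (a • z + b • w) p = a * ev z p + b * ev w p := by
  unfold ev
  by_cases h : p ∈ coords V E
  · rw [dif_pos h, dif_pos h, dif_pos h]; simp [smul_eq_mul]
  · rw [dif_neg h, dif_neg h, dif_neg h]
    by_cases h0 : p = ∅
    · simp [h0]; linarith
    · simp [h0]

lemma prod01 {x : N → ℝ} {s : Finset N} (h : ∀ v ∈ s, x v = 0 ∨ x v = 1) :
    (∏ v ∈ s, x v) = 0 ∨ (∏ v ∈ s, x v) = 1 := by
  by_cases h0 : ∃ v ∈ s, x v = 0
  · obtain ⟨v, hv, hx⟩ := h0; exact Or.inl (Finset.prod_eq_zero hv hx)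
  · push_neg at h0
    right; apply Finset.prod_eq_one; intro v hv
    rcases h v hv with h' | h'
    · exact absurd h' (h0 v hv)
    · exact h'

lemma prod01_all_one {x : N → ℝ} {s : Finset N} (hx : ∀ v ∈ s, x v = 0 ∨ x v = 1)
    (h : (∏ v ∈ s, x v) = 1) : ∀ v ∈ s, x v = 1 := by
  intro v hv
  rcases hx v hv with h0 | h1
  · rw [Finset.prod_eq_zero hv h0] at h; norm_num at h
  · exact h1

lemma prod01_mono {x : N → ℝ} {s t : Finset N} (hst : s ⊆ t)
    (hx : ∀ v ∈ t, x v = 0 ∨ x v = 1) : (∏ v ∈ t, x v) ≤ ∏ v ∈ s, x v := by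
  rw [← Finset.prod_sdiff hst]
  rcases prod01 (fun v hv => hx v (mem_sdiff.1 hv).1) with h | h
  · rw [h, zero_mul]
    rcases prod01 (fun v hv => hx v (hst hv)) with h' | h' <;> simp [h']
  · rw [h, one_mul]

lemma binary_ineq {x : N → ℝ} {e1 e2 e3 : Finset N}
    (h3 : e3 ⊆ e1 ∪ e2)
    (hx : ∀ v ∈ e1 ∪ e2, x v = 0 ∨ x v = 1) :
    (∏ v ∈ e1, x v) + (∏ v ∈ e2, x v) ≤ (∏ v ∈ e1 ∩ e2, x v) + (∏ v ∈ e3, x v) := by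
  have hx1 : ∀ v ∈ e1, x v = 0 ∨ x v = 1 := fun v hv => hx v (mem_union_left _ hv)
  have hx2 : ∀ v ∈ e2, x v = 0 ∨ x v = 1 := fun v hv => hx v (mem_union_right _ hv)
  have hx3 : ∀ v ∈ e3, x v = 0 ∨ x v = 1 := fun v hv => hx v (h3 hv)
  have hP3 : (0:ℝ) ≤ ∏ v ∈ e3, x v := by
    rcases prod01 hx3 with h | h <;> simp [h]
  rcases prod01 hx1 with h1 | h1
  · have := prod01_mono (inter_subset_right : e1 ∩ e2 ⊆ e2) hx2
    linarith
  · rcases prod01 hx2 with h2 | h2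
    · have := prod01_mono (inter_subset_left : e1 ∩ e2 ⊆ e1) hx1
      linarith
    · have hall : ∀ v ∈ e1 ∪ e2, x v = 1 := by
        intro v hv
        rcases mem_union.1 hv with h | h
        · exact prod01_all_one hx1 h1 v h
        · exact prod01_all_one hx2 h2 v h
      have hg : (∏ v ∈ e1 ∩ e2, x v) = 1 :=
        Finset.prod_eq_one fun v hv => hall v (mem_union_left _ (mem_of_mem_inter_left hv))
      have h33 : (∏ v ∈ e3, x v) = 1 := Finset.prod_eq_one fun v hv => hall v (h3 hv)
      rw [h1, h2, hg, h33]

end FacetAux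

theorem stmt18 {N : Type*} [DecidableEq N] (V : Finset N) (E : Finset (Finset N))
    (hcard : ∀ e ∈ E, 2 ≤ e.card) (hVsub : ∀ e ∈ E, e ⊆ V)
    (hcover : ∀ v ∈ V, ∃ e ∈ E, v ∈ e)
    (hcl : clE E = E)
    (e1 e2 e3 : Finset N) (h1 : e1 ∈ E) (h2 : e2 ∈ E) (h3 : e3 ∈ E)
    (hd12 : (e1 \ e2).Nonempty) (hd21 : (e2 \ e1).Nonempty)
    (hd13 : (e1 \ e3).Nonempty) (hd31 : (e3 \ e1).Nonempty)
    (hd23 : (e2 \ e3).Nonempty) (hd32 : (e3 \ e2).Nonempty)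
    (halpha : ∀ e ∈ E, (((e1 ∩ e2) ∪ (e2 ∩ e3) ∪ (e1 ∩ e3)) \ e).Nonempty)
    (hw1 : e1 \ (e2 ∪ e3) = ∅) (hw2 : e2 \ (e1 ∪ e3) = ∅)
    (hw3 : e3 \ (e1 ∪ e2) = ∅) :
    (∀ z ∈ MP (e1 ∪ e2 ∪ e3) (clE {e1, e2, e3}),
      ev z e1 + ev z e2 ≤ ev z (e1 ∩ e2) + ev z e3) ∧
    Module.finrank ℝ
      ↥(vectorSpan ℝ { z ∈ MP (e1 ∪ e2 ∪ e3) (clE {e1, e2, e3}) |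
          ev z e1 + ev z e2 = ev z (e1 ∩ e2) + ev z e3 }) =
      (e1 ∪ e2 ∪ e3).card + (clE {e1, e2, e3}).card - 1 := by
  classical
  -- notation
  set Vc : Finset N := e1 ∪ e2 ∪ e3 with hVcDef
  set Ec : Finset (Finset N) := clE {e1, e2, e3} with hEcDef
  set g0 : Finset N := e1 ∩ e2 with hg0Def
  -- non-subset facts
  have h12 : ¬ e1 ⊆ e2 := fun h => by
    obtain ⟨x, hx⟩ := hd12; rw [mem_sdiff] at hx; exact hx.2 (h hx.1)
  have h21 : ¬ e2 ⊆ e1 := fun h => by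
    obtain ⟨x, hx⟩ := hd21; rw [mem_sdiff] at hx; exact hx.2 (h hx.1)
  have h13 : ¬ e1 ⊆ e3 := fun h => by
    obtain ⟨x, hx⟩ := hd13; rw [mem_sdiff] at hx; exact hx.2 (h hx.1)
  have h31 : ¬ e3 ⊆ e1 := fun h => by
    obtain ⟨x, hx⟩ := hd31; rw [mem_sdiff] at hx; exact hx.2 (h hx.1)
  have h23 : ¬ e2 ⊆ e3 := fun h => by
    obtain ⟨x, hx⟩ := hd23; rw [mem_sdiff] at hx; exact hx.2 (h hx.1)
  have h32 : ¬ e3 ⊆ e2 := fun h => by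
    obtain ⟨x, hx⟩ := hd32; rw [mem_sdiff] at hx; exact hx.2 (h hx.1)
  -- pointwise wheel conditions
  have hptw1 : ∀ x ∈ e1, x ∉ e2 → x ∈ e3 := by
    intro x hx hx2
    by_contra hx3
    have : x ∈ e1 \ (e2 ∪ e3) := mem_sdiff.2 ⟨hx, fun h => by
      rcases mem_union.1 h with h | h; exact hx2 h; exact hx3 h⟩
    rw [hw1] at this; exact absurd this (notMem_empty x)
  have hptw2 : ∀ x ∈ e2, x ∉ e1 → x ∈ e3 := by
    intro x hx hx1
    by_contra hx3
    have : x ∈ e2 \ (e1 ∪ e3) := mem_sdiff.2 ⟨hx, fun h => by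
      rcases mem_union.1 h with h | h; exact hx1 h; exact hx3 h⟩
    rw [hw2] at this; exact absurd this (notMem_empty x)
  have hptw3 : ∀ x ∈ e3, x ∉ e1 → x ∈ e2 := by
    intro x hx hx1
    by_contra hx2
    have : x ∈ e3 \ (e1 ∪ e2) := mem_sdiff.2 ⟨hx, fun h => by
      rcases mem_union.1 h with h | h; exact hx1 h; exact hx2 h⟩
    rw [hw3] at this; exact absurd this (notMem_empty x)
  have hptw3' : ∀ x ∈ e3, x ∉ e2 → x ∈ e1 := by
    intro x hx hx2
    by_contra hx1
    exact hx2 (hptw3 x hx hx1)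
  -- special vertices
  obtain ⟨va, hva⟩ := hd13
  rw [mem_sdiff] at hva
  have hva1 : va ∈ e1 := hva.1
  have hva3 : va ∉ e3 := hva.2
  have hva2 : va ∈ e2 := by
    by_contra h; exact hva3 (hptw1 va hva1 h)
  have hvag0 : va ∈ g0 := mem_inter.2 ⟨hva1, hva2⟩
  obtain ⟨cc, hcc⟩ := hd21
  rw [mem_sdiff] at hcc
  have hcc2 : cc ∈ e2 := hcc.1
  have hcc1 : cc ∉ e1 := hcc.2
  have hcc3 : cc ∈ e3 := hptw2 cc hcc2 hcc1
  have hccg0 : cc ∉ g0 := fun h => hcc1 (mem_inter.1 h).1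
  -- difference identities
  have hdiffeq1 : e1 \ e2 = e3 \ e2 := by
    ext x
    rw [mem_sdiff, mem_sdiff]
    constructor
    · rintro ⟨hx1, hx2⟩; exact ⟨hptw1 x hx1 hx2, hx2⟩
    · rintro ⟨hx3, hx2⟩; exact ⟨hptw3' x hx3 hx2, hx2⟩
  have hdiffeq2 : e2 \ e1 = e3 \ e1 := by
    ext x
    rw [mem_sdiff, mem_sdiff]
    constructor
    · rintro ⟨hx2, hx1⟩; exact ⟨hptw2 x hx2 hx1, hx1⟩
    · rintro ⟨hx3, hx1⟩; exact ⟨hptw3 x hx3 hx1, hx1⟩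
  -- cardinalities
  have hc1 : 2 ≤ e1.card := hcard e1 h1
  have hc2 : 2 ≤ e2.card := hcard e2 h2
  have hc3 : 2 ≤ e3.card := hcard e3 h3
  -- basic subset facts about Vc
  have he1V : e1 ⊆ Vc := subset_union_left.trans subset_union_left
  have he2V : e2 ⊆ Vc := subset_union_right.trans subset_union_left
  have he3V : e3 ⊆ Vc := subset_union_right
  -- membership in Ec / coords
  have he1E : e1 ∈ Ec := mem_clE3.2 ⟨hc1, Or.inl Subset.rfl⟩
  have he2E : e2 ∈ Ec := mem_clE3.2 ⟨hc2, Or.inr (Or.inl Subset.rfl)⟩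
  have he3E : e3 ∈ Ec := mem_clE3.2 ⟨hc3, Or.inr (Or.inr Subset.rfl)⟩
  have he1co : e1 ∈ coords Vc Ec := mem_coords_iff.2 (Or.inl he1E)
  have he2co : e2 ∈ coords Vc Ec := mem_coords_iff.2 (Or.inl he2E)
  have he3co : e3 ∈ coords Vc Ec := mem_coords_iff.2 (Or.inl he3E)
  have hg0ne : g0.Nonempty := ⟨va, hvag0⟩
  have hg0e1 : g0 ⊆ e1 := inter_subset_left
  have hg0e2 : g0 ⊆ e2 := inter_subset_right
  have hg0co : g0 ∈ coords Vc Ec := by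
    by_cases h : 2 ≤ g0.card
    · exact mem_coords_iff.2 (Or.inl (mem_clE3.2 ⟨h, Or.inl hg0e1⟩))
    · have hcard1 : g0.card = 1 := by
        have := card_pos.2 hg0ne; omega
      obtain ⟨w, hw⟩ := card_eq_one.1 hcard1
      have hwV : w ∈ Vc := he1V (hg0e1 (hw ▸ mem_singleton_self w))
      exact mem_coords_iff.2 (Or.inr ⟨w, hwV, hw⟩)
  have hEcV : ∀ q ∈ Ec, q ⊆ Vc := by
    intro q hq
    rcases (mem_clE3.1 hq).2 with h | h | h
    · exact h.trans he1V
    · exact h.trans he2V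
    · exact h.trans he3V
  have hqV : ∀ q ∈ coords Vc Ec, q ⊆ Vc := by
    intro q hq
    rcases mem_coords_iff.1 hq with h | ⟨v, hv, rfl⟩
    · exact hEcV q h
    · exact singleton_subset_iff.2 hv
  have hqnonempty : ∀ q ∈ coords Vc Ec, q.Nonempty := by
    intro q hq
    rcases mem_coords_iff.1 hq with h | ⟨v, hv, rfl⟩
    · have := (mem_clE3.1 h).1; exact card_pos.1 (by omega)
    · exact singleton_nonempty v
  -- "maximal" facts
  have hself1 : ∀ q ∈ Ec, e1 ⊆ q → q = e1 := by
    intro q hq h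
    rcases (mem_clE3.1 hq).2 with hs | hs | hs
    · exact Subset.antisymm hs h
    · exact absurd (h.trans hs) h12
    · exact absurd (h.trans hs) h13
  have hself2 : ∀ q ∈ Ec, e2 ⊆ q → q = e2 := by
    intro q hq h
    rcases (mem_clE3.1 hq).2 with hs | hs | hs
    · exact absurd (h.trans hs) h21
    · exact Subset.antisymm hs h
    · exact absurd (h.trans hs) h23
  have hself3 : ∀ q ∈ Ec, e3 ⊆ q → q = e3 := by
    intro q hq h
    rcases (mem_clE3.1 hq).2 with hs | hs | hs
    · exact absurd (h.trans hs) h31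
    · exact absurd (h.trans hs) h32
    · exact Subset.antisymm hs h
  -- completing e1 from g0 and e1 \ e2
  have hcomplete1 : ∀ p : Finset N, g0 ⊆ p → (∀ x ∈ e1, x ∉ e2 → x ∈ p) → e1 ⊆ p := by
    intro p hg hrest x hx
    by_cases hx2 : x ∈ e2
    · exact hg (mem_inter.2 ⟨hx, hx2⟩)
    · exact hrest x hx hx2
  have hcomplete2 : ∀ p : Finset N, g0 ⊆ p → (∀ x ∈ e2, x ∉ e1 → x ∈ p) → e2 ⊆ p := by
    intro p hg hrest x hx
    by_cases hx1 : x ∈ e1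
    · exact hg (mem_inter.2 ⟨hx1, hx⟩)
    · exact hrest x hx hx1
  -- Part 1 : validity
  have h3sub : e3 ⊆ e1 ∪ e2 := by
    intro x hx
    by_cases hx1 : x ∈ e1
    · exact mem_union_left _ hx1
    · exact mem_union_right _ (hptw3 x hx hx1)
  have hvalid : ∀ z ∈ MP Vc Ec, ev z e1 + ev z e2 ≤ ev z g0 + ev z e3 := by
    intro z hz
    have hconv : Convex ℝ {z : Pt Vc Ec | ev z e1 + ev z e2 ≤ ev z g0 + ev z e3} := by
      intro z hz w hw a b ha hb hab
      simp only [Set.mem_setOf_eq] at hz hw ⊢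
      rw [ev_combo z w hab, ev_combo z w hab, ev_combo z w hab, ev_combo z w hab]
      nlinarith [mul_le_mul_of_nonneg_left hz ha, mul_le_mul_of_nonneg_left hw hb]
    have hsubml : mlSet Vc Ec ⊆ {z : Pt Vc Ec | ev z e1 + ev z e2 ≤ ev z g0 + ev z e3} := by
      intro z hzm
      obtain ⟨hbin, hprod⟩ := hzm
      have hxbin : ∀ v ∈ e1 ∪ e2, ev z {v} = 0 ∨ ev z {v} = 1 := by
        intro v hv
        have hvV : v ∈ Vc := by
          rcases mem_union.1 hv with h | h
          · exact he1V h
          · exact he2V h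
        have hco : ({v} : Finset N) ∈ coords Vc Ec := mem_coords_iff.2 (Or.inr ⟨v, hvV, rfl⟩)
        rw [ev, dif_pos hco]
        exact hbin _
      have he1p : ev z e1 = ∏ v ∈ e1, ev z {v} := hprod e1 he1E
      have he2p : ev z e2 = ∏ v ∈ e2, ev z {v} := hprod e2 he2E
      have he3p : ev z e3 = ∏ v ∈ e3, ev z {v} := hprod e3 he3E
      have hg0p : ev z g0 = ∏ v ∈ g0, ev z {v} := by
        by_cases h : 2 ≤ g0.card
        · exact hprod g0 (mem_clE3.2 ⟨h, Or.inl hg0e1⟩)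
        · have hcard1 : g0.card = 1 := by
            have := card_pos.2 hg0ne; omega
          obtain ⟨w, hw⟩ := card_eq_one.1 hcard1
          rw [hw, prod_singleton]
      simp only [Set.mem_setOf_eq]
      rw [he1p, he2p, he3p, hg0p]
      exact binary_ineq h3sub hxbin
    exact convexHull_min hsubml hconv hz
  -- face membership helper
  have hzF : ∀ S : Finset N,
      ((if e1 ⊆ S then (1:ℝ) else 0) + (if e2 ⊆ S then (1:ℝ) else 0)
        = (if g0 ⊆ S then (1:ℝ) else 0) + (if e3 ⊆ S then (1:ℝ) else 0)) →
      zeta Vc Ec S ∈ { z ∈ MP Vc Ec | ev z e1 + ev z e2 = ev z g0 + ev z e3 } := by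
    intro S hS
    refine ⟨subset_convexHull ℝ _ (zeta_mem_mlSet hEcV S), ?_⟩
    rw [ev_zeta S he1co, ev_zeta S he2co, ev_zeta S hg0co, ev_zeta S he3co]
    exact hS
  set F : Set (Pt Vc Ec) :=
    { z ∈ MP Vc Ec | ev z e1 + ev z e2 = ev z g0 + ev z e3 } with hFdef
  -- small subset helpers
  have hne_sub_empty : ∀ q : Finset N, q.Nonempty → ¬ q ⊆ ∅ :=
    fun q hq h => hq.ne_empty (subset_empty.1 h)
  have hbig_nsub_sing : ∀ q : Finset N, 2 ≤ q.card → ∀ v : N, ¬ q ⊆ {v} := by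
    intro q hq v h
    have := card_le_card h
    rw [card_singleton] at this
    omega
  -- specific face points
  have hF_empty : zeta Vc Ec ∅ ∈ F := by
    apply hzF
    rw [if_neg (hne_sub_empty e1 ⟨va, hva1⟩), if_neg (hne_sub_empty e2 ⟨va, hva2⟩),
      if_neg (hne_sub_empty g0 hg0ne), if_neg (hne_sub_empty e3 ⟨cc, hcc3⟩)]
  have hF_sing : ∀ v : N, ({v} : Finset N) ≠ g0 → zeta Vc Ec {v} ∈ F := by
    intro v hne
    apply hzF
    have hg0v : ¬ g0 ⊆ {v} := by
      intro h
      rcases subset_singleton_iff.1 h with h' | h'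
      · exact hg0ne.ne_empty h'
      · exact hne h'.symm
    rw [if_neg (hbig_nsub_sing e1 hc1 v), if_neg (hbig_nsub_sing e2 hc2 v),
      if_neg hg0v, if_neg (hbig_nsub_sing e3 hc3 v)]
  have hF_free : ∀ p ∈ Ec, p ≠ e1 → p ≠ e2 → p ≠ e3 → ¬ g0 ⊆ p → zeta Vc Ec p ∈ F := by
    intro p hp hne1 hne2 hne3 hng0
    apply hzF
    rw [if_neg (fun h : e1 ⊆ p => hne1 (hself1 p hp h)),
      if_neg (fun h : e2 ⊆ p => hne2 (hself2 p hp h)), if_neg hng0,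
      if_neg (fun h : e3 ⊆ p => hne3 (hself3 p hp h))]
  have hF_e1 : zeta Vc Ec e1 ∈ F := by
    apply hzF
    rw [if_pos (Subset.refl e1), if_neg h21, if_pos hg0e1, if_neg h31]
  have hF_e2 : zeta Vc Ec e2 ∈ F := by
    apply hzF
    rw [if_neg h12, if_pos (Subset.refl e2), if_pos hg0e2, if_neg h32]
    norm_num
  have hF_V : zeta Vc Ec Vc ∈ F := by
    apply hzF
    rw [if_pos he1V, if_pos he2V, if_pos (hg0e1.trans he1V), if_pos he3V]
  have hF_Vcc : zeta Vc Ec (Vc.erase cc) ∈ F := by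
    apply hzF
    rw [if_pos (subset_erase.2 ⟨he1V, hcc1⟩),
      if_neg (fun h : e2 ⊆ Vc.erase cc => (notMem_erase cc Vc) (h hcc2)),
      if_pos (subset_erase.2 ⟨hg0e1.trans he1V, hccg0⟩),
      if_neg (fun h : e3 ⊆ Vc.erase cc => (notMem_erase cc Vc) (h hcc3))]
  -- erase helpers
  have herase_va : ∀ (S q : Finset N), va ∈ q → ¬ q ⊆ S.erase va :=
    fun S q hq h => (notMem_erase va S) (h hq)
  have herase_va' : ∀ (S q : Finset N), va ∉ q → (q ⊆ S.erase va ↔ q ⊆ S) := by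
    intro S q hq
    constructor
    · exact fun h => h.trans (erase_subset va S)
    · exact fun h => subset_erase.2 ⟨h, hq⟩
  -- bad-edge face points, e1 side
  have hbad1_not1 : ∀ p : Finset N, g0 ⊆ p → p ⊆ e1 → p ≠ e1 → ¬ e1 ⊆ p ∪ e2 := by
    intro p hg hpe1 hne h
    apply hne
    apply Subset.antisymm hpe1
    apply hcomplete1 p hg
    intro x hx hx2
    rcases mem_union.1 (h hx) with h' | h'
    · exact h'
    · exact absurd h' hx2
  have hbad1_not3 : ∀ p : Finset N, g0 ⊆ p → p ⊆ e1 → p ≠ e1 → ¬ e3 ⊆ p ∪ e2 := by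
    intro p hg hpe1 hne h
    apply hne
    apply Subset.antisymm hpe1
    apply hcomplete1 p hg
    intro x hx hx2
    have hx3 : x ∈ e3 := hptw1 x hx hx2
    rcases mem_union.1 (h hx3) with h' | h'
    · exact h'
    · exact absurd h' hx2
  have hF_b1 : ∀ p : Finset N, g0 ⊆ p → p ⊆ e1 → p ≠ e1 → zeta Vc Ec (p ∪ e2) ∈ F := by
    intro p hg hpe1 hne
    apply hzF
    rw [if_neg (hbad1_not1 p hg hpe1 hne), if_pos (subset_union_right : e2 ⊆ p ∪ e2),
      if_pos (hg0e2.trans (subset_union_right : e2 ⊆ p ∪ e2)),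
      if_neg (hbad1_not3 p hg hpe1 hne)]
    norm_num
  have hF_b1' : ∀ p : Finset N, g0 ⊆ p → p ⊆ e1 → p ≠ e1 →
      zeta Vc Ec ((p ∪ e2).erase va) ∈ F := by
    intro p hg hpe1 hne
    apply hzF
    rw [if_neg (herase_va _ _ hva1), if_neg (herase_va _ _ hva2),
      if_neg (herase_va _ _ hvag0),
      if_neg (fun h : e3 ⊆ (p ∪ e2).erase va =>
        hbad1_not3 p hg hpe1 hne ((herase_va' _ _ hva3).1 h))]
  have hF_e2va : zeta Vc Ec (e2.erase va) ∈ F := by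
    apply hzF
    rw [if_neg (herase_va _ _ hva1), if_neg (herase_va _ _ hva2),
      if_neg (herase_va _ _ hvag0),
      if_neg (fun h : e3 ⊆ e2.erase va => h32 ((herase_va' _ _ hva3).1 h))]
  -- bad-edge face points, e2 side
  have hbad2_not2 : ∀ p : Finset N, g0 ⊆ p → p ⊆ e2 → p ≠ e2 → ¬ e2 ⊆ p ∪ e1 := by
    intro p hg hpe2 hne h
    apply hne
    apply Subset.antisymm hpe2
    apply hcomplete2 p hg
    intro x hx hx1
    rcases mem_union.1 (h hx) with h' | h'
    · exact h'
    · exact absurd h' hx1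
  have hbad2_not3 : ∀ p : Finset N, g0 ⊆ p → p ⊆ e2 → p ≠ e2 → ¬ e3 ⊆ p ∪ e1 := by
    intro p hg hpe2 hne h
    apply hne
    apply Subset.antisymm hpe2
    apply hcomplete2 p hg
    intro x hx hx1
    have hx3 : x ∈ e3 := hptw2 x hx hx1
    rcases mem_union.1 (h hx3) with h' | h'
    · exact h'
    · exact absurd h' hx1
  have hF_b2 : ∀ p : Finset N, g0 ⊆ p → p ⊆ e2 → p ≠ e2 → zeta Vc Ec (p ∪ e1) ∈ F := by
    intro p hg hpe2 hne
    apply hzF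
    rw [if_pos (subset_union_right : e1 ⊆ p ∪ e1), if_neg (hbad2_not2 p hg hpe2 hne),
      if_pos (hg0e1.trans (subset_union_right : e1 ⊆ p ∪ e1)),
      if_neg (hbad2_not3 p hg hpe2 hne)]
  have hF_b2' : ∀ p : Finset N, g0 ⊆ p → p ⊆ e2 → p ≠ e2 →
      zeta Vc Ec ((p ∪ e1).erase va) ∈ F := by
    intro p hg hpe2 hne
    apply hzF
    rw [if_neg (herase_va _ _ hva1), if_neg (herase_va _ _ hva2),
      if_neg (herase_va _ _ hvag0),
      if_neg (fun h : e3 ⊆ (p ∪ e1).erase va =>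
        hbad2_not3 p hg hpe2 hne ((herase_va' _ _ hva3).1 h))]
  have hF_e1va : zeta Vc Ec (e1.erase va) ∈ F := by
    apply hzF
    rw [if_neg (herase_va _ _ hva1), if_neg (herase_va _ _ hva2),
      if_neg (herase_va _ _ hvag0),
      if_neg (fun h : e3 ⊆ e1.erase va => h31 ((herase_va' _ _ hva3).1 h))]
  -- counting
  have hcard_coords : (coords Vc Ec).card = Ec.card + Vc.card := by
    rw [coords, card_union_of_disjoint, card_image_of_injective _ Finset.singleton_injective]
    rw [disjoint_left]
    intro q hqE hqI
    obtain ⟨v, _, rfl⟩ := mem_image.1 hqI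
    have := (mem_clE3.1 hqE).1
    rw [card_singleton] at this
    omega
  have hamb : Module.finrank ℝ (Pt Vc Ec) = Ec.card + Vc.card := by
    rw [Module.finrank_pi, Fintype.card_coe, hcard_coords]
  -- distinctness of the four key coordinates
  have hne_e1e2 : e1 ≠ e2 := fun h => h12 (h ▸ Subset.rfl)
  have hne_e1e3 : e1 ≠ e3 := fun h => h13 (h ▸ Subset.rfl)
  have hne_e2e3 : e2 ≠ e3 := fun h => h23 (h ▸ Subset.rfl)
  have hne_g0e1 : g0 ≠ e1 := fun h => h12 (h ▸ hg0e2)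
  have hne_g0e2 : g0 ≠ e2 := fun h => h21 (h ▸ hg0e1)
  have hne_g0e3 : g0 ≠ e3 := fun h => hva3 (h ▸ hvag0)
  -- the defining linear functional
  set π : {p : Finset N // p ∈ coords Vc Ec} → (Pt Vc Ec →ₗ[ℝ] ℝ) :=
    fun q => LinearMap.proj q with hπdef
  set ℓ : Pt Vc Ec →ₗ[ℝ] ℝ :=
    π ⟨e1, he1co⟩ + π ⟨e2, he2co⟩ - π ⟨g0, hg0co⟩ - π ⟨e3, he3co⟩ with hℓdef
  have hℓapp : ∀ z : Pt Vc Ec,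
      ℓ z = z ⟨e1, he1co⟩ + z ⟨e2, he2co⟩ - z ⟨g0, hg0co⟩ - z ⟨e3, he3co⟩ := fun z => rfl
  have hev_co : ∀ (z : Pt Vc Ec) (p : Finset N) (h : p ∈ coords Vc Ec),
      ev z p = z ⟨p, h⟩ := fun z p h => dif_pos h
  have hℓF : ∀ z ∈ F, ℓ z = 0 := by
    intro z hz
    have := hz.2
    rw [hev_co z e1 he1co, hev_co z e2 he2co, hev_co z g0 hg0co, hev_co z e3 he3co] at this
    rw [hℓapp]
    linarith
  have hspan_le : vectorSpan ℝ F ≤ LinearMap.ker ℓ := by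
    rw [vectorSpan_def]
    apply Submodule.span_le.2
    rintro u ⟨z, hz, w, hw, rfl⟩
    simp only [vsub_eq_sub, SetLike.mem_coe, LinearMap.mem_ker, map_sub]
    rw [hℓF z hz, hℓF w hw, sub_zero]
  have hsurj : Function.Surjective ℓ := by
    intro c
    refine ⟨c • ((Pi.single ⟨e1, he1co⟩ (1:ℝ)) : Pt Vc Ec), ?_⟩
    rw [map_smul, hℓapp]
    rw [Pi.single_eq_same,
      Pi.single_eq_of_ne (fun h => hne_e1e2 (congrArg Subtype.val h).symm),
      Pi.single_eq_of_ne (fun h => hne_g0e1 (congrArg Subtype.val h)),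
      Pi.single_eq_of_ne (fun h => hne_e1e3 (congrArg Subtype.val h).symm)]
    simp
  have hker : Module.finrank ℝ (LinearMap.ker ℓ) = Ec.card + Vc.card - 1 := by
    have hrn := LinearMap.finrank_range_add_finrank_ker ℓ
    rw [LinearMap.range_eq_top.2 hsurj, finrank_top, Module.finrank_self, hamb] at hrn
    omega
  have hub : Module.finrank ℝ ↥(vectorSpan ℝ F) ≤ Ec.card + Vc.card - 1 := by
    rw [← hker]
    exact Submodule.finrank_mono hspan_le
  -- ===== lower bound =====
  set K : Finset (Finset N) := (coords Vc Ec).erase g0 with hKdef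
  have hKcard : K.card = Ec.card + Vc.card - 1 := by
    rw [hKdef, card_erase_of_mem hg0co, hcard_coords]
  have hsubmem : ∀ S S' : Finset N, zeta Vc Ec S ∈ F → zeta Vc Ec S' ∈ F →
      zeta Vc Ec S - zeta Vc Ec S' ∈ vectorSpan ℝ F := by
    intro S S' hS hS'
    rw [vectorSpan_def]
    exact Submodule.subset_span ⟨_, hS, _, hS', rfl⟩
  set M0 : ℕ := Vc.card + 1 with hM0def
  set rnk : {p : Finset N // p ∈ K} → ℕ := fun p =>
    if p.1.card ≤ 1 then 0
    else if p.1 = e1 then M0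
    else if p.1 = e2 then M0 + 1
    else if p.1 = e3 then M0 + 2
    else p.1.card with hrnkdef
  set u : {p : Finset N // p ∈ K} → Pt Vc Ec := fun p =>
    if p.1.card ≤ 1 then zeta Vc Ec p.1 - zeta Vc Ec ∅
    else if p.1 = e1 then zeta Vc Ec e1 - zeta Vc Ec ∅
    else if p.1 = e2 then zeta Vc Ec e2 - zeta Vc Ec ∅
    else if p.1 = e3 then zeta Vc Ec Vc - zeta Vc Ec (Vc.erase cc)
    else if g0 ⊆ p.1 then
      (if p.1 ⊆ e1 then
        (zeta Vc Ec (p.1 ∪ e2) - zeta Vc Ec ((p.1 ∪ e2).erase va))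
          - (zeta Vc Ec e2 - zeta Vc Ec (e2.erase va))
       else
        (zeta Vc Ec (p.1 ∪ e1) - zeta Vc Ec ((p.1 ∪ e1).erase va))
          - (zeta Vc Ec e1 - zeta Vc Ec (e1.erase va)))
    else zeta Vc Ec p.1 - zeta Vc Ec ∅ with hudef
  -- specification of u and rnk
  have hspec : ∀ p : {p : Finset N // p ∈ K},
      (∃ v : N, p.1 = {v} ∧ rnk p = 0 ∧ u p = zeta Vc Ec p.1 - zeta Vc Ec ∅) ∨
      (p.1 = e1 ∧ rnk p = M0 ∧ u p = zeta Vc Ec e1 - zeta Vc Ec ∅) ∨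
      (p.1 = e2 ∧ rnk p = M0 + 1 ∧ u p = zeta Vc Ec e2 - zeta Vc Ec ∅) ∨
      (p.1 = e3 ∧ rnk p = M0 + 2 ∧ u p = zeta Vc Ec Vc - zeta Vc Ec (Vc.erase cc)) ∨
      (p.1 ∈ Ec ∧ 2 ≤ p.1.card ∧ p.1 ≠ e1 ∧ p.1 ≠ e2 ∧ p.1 ≠ e3 ∧ rnk p = p.1.card ∧
        ((g0 ⊆ p.1 ∧ p.1 ⊆ e1 ∧
           u p = (zeta Vc Ec (p.1 ∪ e2) - zeta Vc Ec ((p.1 ∪ e2).erase va))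
             - (zeta Vc Ec e2 - zeta Vc Ec (e2.erase va))) ∨
         (g0 ⊆ p.1 ∧ ¬ p.1 ⊆ e1 ∧ p.1 ⊆ e2 ∧
           u p = (zeta Vc Ec (p.1 ∪ e1) - zeta Vc Ec ((p.1 ∪ e1).erase va))
             - (zeta Vc Ec e1 - zeta Vc Ec (e1.erase va))) ∨
         (¬ g0 ⊆ p.1 ∧ u p = zeta Vc Ec p.1 - zeta Vc Ec ∅))) := by
    intro p
    have hpco : p.1 ∈ coords Vc Ec := mem_of_mem_erase p.2
    by_cases hc : p.1.card ≤ 1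
    · left
      rcases mem_coords_iff.1 hpco with hE | ⟨v, _, hveq⟩
      · exact absurd (mem_clE3.1 hE).1 (by omega)
      · refine ⟨v, hveq, ?_, ?_⟩
        · simp only [hrnkdef]; rw [if_pos hc]
        · simp only [hudef]; rw [if_pos hc]
    · have hpE : p.1 ∈ Ec := by
        rcases mem_coords_iff.1 hpco with hE | ⟨v, _, hveq⟩
        · exact hE
        · exact absurd (by rw [hveq, card_singleton] : p.1.card = 1) (by omega)
      have hc2p : 2 ≤ p.1.card := (mem_clE3.1 hpE).1
      by_cases he1 : p.1 = e1
      · right; left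
        refine ⟨he1, ?_, ?_⟩
        · simp only [hrnkdef]; rw [if_neg hc, if_pos he1]
        · simp only [hudef]; rw [if_neg hc, if_pos he1]
      · by_cases he2 : p.1 = e2
        · right; right; left
          refine ⟨he2, ?_, ?_⟩
          · simp only [hrnkdef]; rw [if_neg hc, if_neg he1, if_pos he2]
          · simp only [hudef]; rw [if_neg hc, if_neg he1, if_pos he2]
        · by_cases he3 : p.1 = e3
          · right; right; right; left
            refine ⟨he3, ?_, ?_⟩
            · simp only [hrnkdef]; rw [if_neg hc, if_neg he1, if_neg he2, if_pos he3]
            · simp only [hudef]; rw [if_neg hc, if_neg he1, if_neg he2, if_pos he3]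
          · right; right; right; right
            refine ⟨hpE, hc2p, he1, he2, he3, ?_, ?_⟩
            · simp only [hrnkdef]; rw [if_neg hc, if_neg he1, if_neg he2, if_neg he3]
            · by_cases hg : g0 ⊆ p.1
              · by_cases hs1 : p.1 ⊆ e1
                · left
                  refine ⟨hg, hs1, ?_⟩
                  simp only [hudef]
                  rw [if_neg hc, if_neg he1, if_neg he2, if_neg he3, if_pos hg, if_pos hs1]
                · right; left
                  have hs2 : p.1 ⊆ e2 := by
                    rcases (mem_clE3.1 hpE).2 with h | h | h
                    · exact absurd h hs1
                    · exact h
                    · exact absurd (h (hg hvag0)) hva3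
                  refine ⟨hg, hs1, hs2, ?_⟩
                  simp only [hudef]
                  rw [if_neg hc, if_neg he1, if_neg he2, if_neg he3, if_pos hg, if_neg hs1]
              · right; right
                refine ⟨hg, ?_⟩
                simp only [hudef]
                rw [if_neg hc, if_neg he1, if_neg he2, if_neg he3, if_neg hg]
  -- membership of the u's in the vector span
  have humem : ∀ p : {p : Finset N // p ∈ K}, u p ∈ vectorSpan ℝ F := by
    intro p
    have hpg0 : p.1 ≠ g0 := ne_of_mem_erase p.2
    rcases hspec p with ⟨v, hv, _, hu⟩ | ⟨hp, _, hu⟩ | ⟨hp, _, hu⟩ | ⟨hp, _, hu⟩ |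
      ⟨hpE, hc2p, hne1, hne2, hne3, _, hbr⟩
    · rw [hu, hv]
      exact hsubmem _ _ (hF_sing v (hv ▸ hpg0)) hF_empty
    · rw [hu]; exact hsubmem _ _ hF_e1 hF_empty
    · rw [hu]; exact hsubmem _ _ hF_e2 hF_empty
    · rw [hu]; exact hsubmem _ _ hF_V hF_Vcc
    · rcases hbr with ⟨hg, hs1, hu⟩ | ⟨hg, _, hs2, hu⟩ | ⟨hg, hu⟩
      · rw [hu]
        exact Submodule.sub_mem _
          (hsubmem _ _ (hF_b1 p.1 hg hs1 hne1) (hF_b1' p.1 hg hs1 hne1))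
          (hsubmem _ _ hF_e2 hF_e2va)
      · rw [hu]
        exact Submodule.sub_mem _
          (hsubmem _ _ (hF_b2 p.1 hg hs2 hne2) (hF_b2' p.1 hg hs2 hne2))
          (hsubmem _ _ hF_e1 hF_e1va)
      · rw [hu]
        exact hsubmem _ _ (hF_free p.1 hpE hne1 hne2 hne3 hg) hF_empty
  -- coordinate projections
  set φq : {p : Finset N // p ∈ K} → (Pt Vc Ec →ₗ[ℝ] ℝ) :=
    fun q => LinearMap.proj (⟨q.1, mem_of_mem_erase q.2⟩ :
      {p : Finset N // p ∈ coords Vc Ec}) with hφqdef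
  have hval : ∀ (S S' : Finset N) (q : {p : Finset N // p ∈ K}),
      φq q (zeta Vc Ec S - zeta Vc Ec S')
        = (if q.1 ⊆ S then (1:ℝ) else 0) - (if q.1 ⊆ S' then (1:ℝ) else 0) :=
    fun S S' q => rfl
  have hval2 : ∀ (S1 S2 S3 S4 : Finset N) (q : {p : Finset N // p ∈ K}),
      φq q ((zeta Vc Ec S1 - zeta Vc Ec S2) - (zeta Vc Ec S3 - zeta Vc Ec S4))
        = ((if q.1 ⊆ S1 then (1:ℝ) else 0) - (if q.1 ⊆ S2 then (1:ℝ) else 0))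
          - ((if q.1 ⊆ S3 then (1:ℝ) else 0) - (if q.1 ⊆ S4 then (1:ℝ) else 0)) :=
    fun S1 S2 S3 S4 q => rfl
  -- rank bounds
  have hrnk_le_card : ∀ q : {p : Finset N // p ∈ K},
      q.1 ≠ e1 → q.1 ≠ e2 → q.1 ≠ e3 → rnk q ≤ q.1.card := by
    intro q hq1 hq2 hq3
    simp only [hrnkdef]
    by_cases hb1 : q.1.card ≤ 1
    · rw [if_pos hb1]; exact Nat.zero_le _
    · rw [if_neg hb1, if_neg hq1, if_neg hq2, if_neg hq3]
  have hrnk_le_V : ∀ q : {p : Finset N // p ∈ K},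
      q.1 ≠ e1 → q.1 ≠ e2 → q.1 ≠ e3 → rnk q ≤ Vc.card := by
    intro q hq1 hq2 hq3
    exact (hrnk_le_card q hq1 hq2 hq3).trans
      (card_le_card (hqV q.1 (mem_of_mem_erase q.2)))
  have hrnk_e2 : ∀ q : {p : Finset N // p ∈ K}, q.1 = e2 → rnk q = M0 + 1 := by
    intro q hq
    simp only [hrnkdef]
    rw [if_neg (by rw [hq]; omega), if_neg (by rw [hq]; exact hne_e1e2.symm), if_pos hq]
  -- diagonal entries
  have hdiag : ∀ p : {p : Finset N // p ∈ K}, φq p (u p) ≠ 0 := by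
    intro p
    have hpco : p.1 ∈ coords Vc Ec := mem_of_mem_erase p.2
    have hpg0 : p.1 ≠ g0 := ne_of_mem_erase p.2
    have hpne : p.1.Nonempty := hqnonempty p.1 hpco
    rcases hspec p with ⟨v, hv, _, hu⟩ | ⟨hp, _, hu⟩ | ⟨hp, _, hu⟩ | ⟨hp, _, hu⟩ |
      ⟨hpE, hc2p, hne1, hne2, hne3, _, hbr⟩
    · rw [hu, hval, if_pos (Subset.refl p.1), if_neg (hne_sub_empty p.1 hpne)]
      norm_num
    · rw [hu, hval, hp, if_pos (Subset.refl e1), if_neg (hne_sub_empty e1 ⟨va, hva1⟩)]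
      norm_num
    · rw [hu, hval, hp, if_pos (Subset.refl e2), if_neg (hne_sub_empty e2 ⟨va, hva2⟩)]
      norm_num
    · rw [hu, hval, hp, if_pos he3V,
        if_neg (fun h : e3 ⊆ Vc.erase cc => (notMem_erase cc Vc) (h hcc3))]
      norm_num
    · rcases hbr with ⟨hg, hs1, hu⟩ | ⟨hg, hs1, hs2, hu⟩ | ⟨hg, hu⟩
      · have hvap : va ∈ p.1 := hg hvag0
        have hnp2 : ¬ p.1 ⊆ e2 :=
          fun h => hpg0 (Subset.antisymm (subset_inter hs1 h) hg)
        rw [hu, hval2, if_pos (subset_union_left : p.1 ⊆ p.1 ∪ e2),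
          if_neg (herase_va _ _ hvap), if_neg hnp2, if_neg (herase_va _ _ hvap)]
        norm_num
      · have hvap : va ∈ p.1 := hg hvag0
        rw [hu, hval2, if_pos (subset_union_left : p.1 ⊆ p.1 ∪ e1),
          if_neg (herase_va _ _ hvap), if_neg hs1, if_neg (herase_va _ _ hvap)]
        norm_num
      · rw [hu, hval, if_pos (Subset.refl p.1), if_neg (hne_sub_empty p.1 hpne)]
        norm_num
  -- off-diagonal entries
  have hoff : ∀ q p : {p : Finset N // p ∈ K}, p ≠ q → rnk p ≤ rnk q → φq q (u p) = 0 := by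
    intro q p hne hle
    have hq1 : p.1 ≠ q.1 := fun h => hne (Subtype.ext h)
    have hqco : q.1 ∈ coords Vc Ec := mem_of_mem_erase q.2
    have hqg0 : q.1 ≠ g0 := ne_of_mem_erase q.2
    have hqne : q.1.Nonempty := hqnonempty q.1 hqco
    have hqV' : q.1 ⊆ Vc := hqV q.1 hqco
    rcases hspec p with ⟨v, hv, hr, hu⟩ | ⟨hp, hr, hu⟩ | ⟨hp, hr, hu⟩ | ⟨hp, hr, hu⟩ |
      ⟨hpE, hc2p, hne1, hne2, hne3, hr, hbr⟩
    · -- p is a singleton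
      rw [hu, hval, if_neg (hne_sub_empty q.1 hqne), if_neg]
      · norm_num
      · rw [hv]
        intro h
        rcases subset_singleton_iff.1 h with h' | h'
        · exact hqne.ne_empty h'
        · exact hq1 (hv.trans h'.symm)
    · -- p = e1
      by_cases hsub : q.1 ⊆ e1
      · exfalso
        have hqe1 : q.1 ≠ e1 := fun h => hq1 (hp.trans h.symm)
        have hqe2 : q.1 ≠ e2 := fun h => h21 (h ▸ hsub)
        have hqe3 : q.1 ≠ e3 := fun h => h31 (h ▸ hsub)
        have := hrnk_le_V q hqe1 hqe2 hqe3
        rw [hr] at hle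
        omega
      · rw [hu, hval, if_neg hsub, if_neg (hne_sub_empty q.1 hqne)]
        norm_num
    · -- p = e2
      by_cases hsub : q.1 ⊆ e2
      · exfalso
        have hqe2 : q.1 ≠ e2 := fun h => hq1 (hp.trans h.symm)
        have hqe1 : q.1 ≠ e1 := fun h => h12 (h ▸ hsub)
        have hqe3 : q.1 ≠ e3 := fun h => h32 (h ▸ hsub)
        have := hrnk_le_V q hqe1 hqe2 hqe3
        rw [hr] at hle
        omega
      · rw [hu, hval, if_neg hsub, if_neg (hne_sub_empty q.1 hqne)]
        norm_num
    · -- p = e3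
      by_cases hccq : cc ∈ q.1
      · exfalso
        have hqe3 : q.1 ≠ e3 := fun h => hq1 (hp.trans h.symm)
        have hqe1 : q.1 ≠ e1 := fun h => hcc1 (h ▸ hccq)
        rw [hr] at hle
        by_cases hqe2 : q.1 = e2
        · rw [hrnk_e2 q hqe2] at hle
          omega
        · have := hrnk_le_V q hqe1 hqe2 hqe3
          omega
      · rw [hu, hval, if_pos hqV', if_pos (subset_erase.2 ⟨hqV', hccq⟩)]
        norm_num
    · -- p a non-special edge
      rw [hr] at hle
      have hcontra : ¬ q.1 ⊆ p.1 := by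
        intro hsub
        have hss : q.1 ⊂ p.1 := ssubset_of_subset_of_ne hsub hq1.symm
        have hcard_lt : q.1.card < p.1.card := card_lt_card hss
        have hqe1 : q.1 ≠ e1 := fun h => hne1 (hself1 p.1 hpE (h ▸ hsub))
        have hqe2 : q.1 ≠ e2 := fun h => hne2 (hself2 p.1 hpE (h ▸ hsub))
        have hqe3 : q.1 ≠ e3 := fun h => hne3 (hself3 p.1 hpE (h ▸ hsub))
        have := hrnk_le_card q hqe1 hqe2 hqe3
        omega
      rcases hbr with ⟨hg, hs1, hu⟩ | ⟨hg, hs1, hs2, hu⟩ | ⟨hg, hu⟩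
      · -- bad edge inside e1
        rw [hu, hval2]
        by_cases hvaq : va ∈ q.1
        · rw [if_neg (herase_va _ _ hvaq), if_neg (herase_va _ _ hvaq)]
          by_cases hqe2 : q.1 ⊆ e2
          · rw [if_pos (hqe2.trans (subset_union_right : e2 ⊆ p.1 ∪ e2)), if_pos hqe2]
            norm_num
          · have hnq : ¬ q.1 ⊆ p.1 ∪ e2 := by
              intro hq
              apply hcontra
              rcases mem_coords_iff.1 hqco with hqE | ⟨w, _, hqw⟩
              · rcases (mem_clE3.1 hqE).2 with h | h | h
                · intro x hx
                  rcases mem_union.1 (hq hx) with h' | h'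
                  · exact h'
                  · exact hg (mem_inter.2 ⟨h hx, h'⟩)
                · exact absurd h hqe2
                · exact absurd (h hvaq) hva3
              · exfalso
                apply hqe2
                rw [hqw]
                rw [hqw, mem_singleton] at hvaq
                rw [← hvaq]
                exact singleton_subset_iff.2 hva2
            rw [if_neg hnq, if_neg hqe2]
            norm_num
        · simp only [herase_va' _ _ hvaq]
          ring
      · -- bad edge inside e2
        rw [hu, hval2]
        by_cases hvaq : va ∈ q.1
        · rw [if_neg (herase_va _ _ hvaq), if_neg (herase_va _ _ hvaq)]
          by_cases hqe1 : q.1 ⊆ e1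
          · rw [if_pos (hqe1.trans (subset_union_right : e1 ⊆ p.1 ∪ e1)), if_pos hqe1]
            norm_num
          · have hnq : ¬ q.1 ⊆ p.1 ∪ e1 := by
              intro hq
              apply hcontra
              rcases mem_coords_iff.1 hqco with hqE | ⟨w, _, hqw⟩
              · rcases (mem_clE3.1 hqE).2 with h | h | h
                · exact absurd h hqe1
                · intro x hx
                  rcases mem_union.1 (hq hx) with h' | h'
                  · exact h'
                  · exact hg (mem_inter.2 ⟨h', h hx⟩)
                · exact absurd (h hvaq) hva3
              · exfalso
                apply hqe1
                rw [hqw]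
                rw [hqw, mem_singleton] at hvaq
                rw [← hvaq]
                exact singleton_subset_iff.2 hva1
            rw [if_neg hnq, if_neg hqe1]
            norm_num
        · simp only [herase_va' _ _ hvaq]
          ring
      · -- free edge
        rw [hu, hval, if_neg hcontra, if_neg (hne_sub_empty q.1 hqne)]
        norm_num
  -- linear independence and conclusion
  have hli : LinearIndependent ℝ u := triInd u φq rnk hdiag hoff
  have hli' : LinearIndependent ℝ (fun p : {p : Finset N // p ∈ K} =>
      (⟨u p, humem p⟩ : ↥(vectorSpan ℝ F))) := by
    apply LinearIndependent.of_comp (Submodule.subtype _)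
    exact hli
  have hlb := hli'.fintype_card_le_finrank
  rw [Fintype.card_coe, hKcard] at hlb
  refine ⟨hvalid, ?_⟩
  have hfr : Module.finrank ℝ ↥(vectorSpan ℝ F) = Ec.card + Vc.card - 1 :=
    le_antisymm hub hlb
  rw [hfr]
  omega

end BPO
end

section
/- Let G = (V,E) be a hypergraph with G = cl(G), and let C = e_1, e_2, e_3, e_1 be an α-cycle of G satisfying e_1 \ (e_2 ∪ e_3) = ∅, e_2 \ (e_1 ∪ e_3) = ∅, and e_3 \ (e_1 ∪ e_2) = ∅. Then every point z ∈ CER(G) satisfies 2 z_{e_1∩e_2} − 2 z_{e_1} − 2 z_{e_2} + 2 z_{e_3} ≥ −1; consequently the generalized triangle inequality z_{e_1} + z_{e_2} ≤ z_{e_1∩e_2} + z_{e_3} is a Chvátal–Gomory cut for CER(G). -/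
open Finset

namespace BPO

variable {N : Type*} [DecidableEq N]

/-!
On a maximal edge `m`, Möbius inversion recovers the coordinates of the subsets of `m` from the
values `ψ(U, m)`: `z_f = ∑_{U ⊆ m \ f} ψ(U, m)`. So on `CER(G)`, `f ↦ z_f` is nonnegative,
antitone and supermodular on the subsets of each maximal edge. Every edge lies in a maximal one,
and `e₃ ⊆ e₁ ∪ e₂` makes `e₃` the union of `e₁ ∩ e₃` and `e₂ ∩ e₃`, so
`z₁ + z₂ ≤ z₁₃ + z₂₃ ≤ z₃ + z₁₂₃ ≤ z₃ + 1`. Adding `z₁ + z₂ ≤ 2 z₁₂` and `0 ≤ z₃` gives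
`2 z₁ + 2 z₂ ≤ 2 z₁₂ + 2 z₃ + 1`; thus the triangle inequality holds on `CER(G)` with
right-hand side `1/2`, whose floor is `0`.
-/

lemma sum_powerset_sign (S : Finset N) :
    ∑ W ∈ S.powerset, (if Even W.card then (1 : ℝ) else -1) = if S = ∅ then 1 else 0 := by
  simp only [← neg_one_pow_eq_ite]
  exact_mod_cast sum_powerset_neg_one_pow_card

lemma sum_powerset_sum_powerset_eq {M : Type*} [AddCommMonoid M] (T : Finset N)
    (f : Finset N → Finset N → M) :
    ∑ U ∈ T.powerset, ∑ W ∈ U.powerset, f (U \ W) W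
      = ∑ A ∈ T.powerset, ∑ W ∈ (T \ A).powerset, f A W := by
  rw [sum_sigma', sum_sigma']
  refine sum_nbij' (fun x => ⟨x.1 \ x.2, x.2⟩) (fun x => ⟨x.1 ∪ x.2, x.2⟩) ?_ ?_ ?_ ?_
    fun _ _ => rfl
  · rintro ⟨U, W⟩; grind
  · rintro ⟨A, W⟩; grind
  · rintro ⟨U, W⟩ h
    simp only [mem_sigma, mem_powerset] at h
    simp [sdiff_union_of_subset h.2]
  · rintro ⟨A, W⟩ h
    simp only [mem_sigma, mem_powerset] at h
    simp [union_sdiff_cancel_right (disjoint_sdiff.mono_right h.2)]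

section Psi

variable {V : Finset N} {F : Finset (Finset N)} (z : Pt V F) {e f g : Finset N}

lemma psi_eq_sum_sdiff {U : Finset N} (hU : U ⊆ e) :
    psi z U e =
      ∑ W ∈ U.powerset, (if Even W.card then (1 : ℝ) else -1) * ev z (e \ (U \ W)) := by
  refine sum_congr rfl fun W hW => ?_
  have hWU : W ⊆ U := mem_powerset.mp hW
  congr 2
  ext a
  grind

lemma ev_eq_sum_psi (hf : f ⊆ e) : ev z f = ∑ U ∈ (e \ f).powerset, psi z U e := by
  rw [sum_congr rfl fun U hU => psi_eq_sum_sdiff z ((mem_powerset.mp hU).trans sdiff_subset),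
    sum_powerset_sum_powerset_eq (e \ f)
      fun A W => (if Even W.card then (1 : ℝ) else -1) * ev z (e \ A)]
  simp only [← sum_mul, sum_powerset_sign]
  rw [sum_eq_single_of_mem (e \ f) (mem_powerset_self _)]
  · simp only [Finset.sdiff_self, if_true, one_mul, Finset.sdiff_sdiff_eq_self hf]
  · intro A hA hne
    have hA' : ¬(e \ f) \ A = ∅ := fun h =>
      hne (subset_antisymm (mem_powerset.mp hA) (sdiff_eq_empty_iff_subset.mp h))
    rw [if_neg hA', zero_mul]

variable (hpsi : ∀ U ⊆ e, 0 ≤ psi z U e)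
include hpsi

lemma ev_nonneg_of_psi_nonneg (hf : f ⊆ e) : 0 ≤ ev z f := by
  rw [ev_eq_sum_psi z hf]
  exact sum_nonneg fun U hU => hpsi U ((mem_powerset.mp hU).trans sdiff_subset)

lemma ev_anti_of_psi_nonneg (hfg : f ⊆ g) (hg : g ⊆ e) : ev z g ≤ ev z f := by
  rw [ev_eq_sum_psi z (hfg.trans hg), ev_eq_sum_psi z hg]
  exact sum_le_sum_of_subset_of_nonneg (powerset_mono.mpr (sdiff_subset_sdiff subset_rfl hfg))
    fun U hU _ => hpsi U ((mem_powerset.mp hU).trans sdiff_subset)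

lemma ev_add_ev_le_of_psi_nonneg (hf : f ⊆ e) (hg : g ⊆ e) :
    ev z f + ev z g ≤ ev z (f ∪ g) + ev z (f ∩ g) := by
  rw [ev_eq_sum_psi z hf, ev_eq_sum_psi z hg, ev_eq_sum_psi z (union_subset hf hg),
    ev_eq_sum_psi z (inter_subset_left.trans hf), ← sum_union_inter, add_comm]
  have hinter : (e \ f).powerset ∩ (e \ g).powerset = (e \ (f ∪ g)).powerset := by
    ext U
    simp only [mem_inter, mem_powerset, sdiff_union_distrib, subset_inter_iff]
  rw [hinter]
  gcongr
  · intro U hU _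
    exact hpsi U ((mem_powerset.mp hU).trans sdiff_subset)
  · rw [sdiff_inter_distrib_right]
    exact union_subset (powerset_mono.mpr subset_union_left)
      (powerset_mono.mpr subset_union_right)

end Psi

lemma exists_mem_maxEdges_superset {E : Finset (Finset N)} {e : Finset N} (he : e ∈ E) :
    ∃ m ∈ maxEdges E, e ⊆ m := by
  obtain ⟨m, hm, hmax⟩ :=
    exists_max_image (E.filter (e ⊆ ·)) card ⟨e, mem_filter.mpr ⟨he, subset_rfl⟩⟩
  rw [mem_filter] at hm
  refine ⟨m, mem_filter.mpr ⟨hm.1, fun e' he' hme' => ?_⟩, hm.2⟩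
  exact eq_of_subset_of_card_le hme' (hmax e' (mem_filter.mpr ⟨he', hm.2.trans hme'⟩))

lemma ev_empty_eq_one {V : Finset N} {E : Finset (Finset N)} (z : Pt V (clE E)) : ev z ∅ = 1 := by
  have : (∅ : Finset N) ∉ coords V (clE E) := by
    simp [coords, clE]
  rw [ev, dif_neg this, if_pos rfl]

section CER

variable {V : Finset N} {E : Finset (Finset N)} {z : Pt V (clE E)}

lemma exists_superset_psi_nonneg_of_mem_CER (hz : z ∈ CER V E) {e : Finset N} (he : e ∈ E) :
    ∃ m, e ⊆ m ∧ ∀ U ⊆ m, 0 ≤ psi z U m := by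
  obtain ⟨m, hm, hem⟩ := exists_mem_maxEdges_superset he
  exact ⟨m, hem, hz m hm⟩

lemma neg_one_le_two_mul_triangle_of_mem_CER (hz : z ∈ CER V E) {e1 e2 e3 : Finset N}
    (h1 : e1 ∈ E) (h2 : e2 ∈ E) (h3 : e3 ∈ E) (h3sub : e3 ⊆ e1 ∪ e2) :
    -1 ≤ 2 * ev z (e1 ∩ e2) - 2 * ev z e1 - 2 * ev z e2 + 2 * ev z e3 := by
  obtain ⟨m1, hm1, hpsi1⟩ := exists_superset_psi_nonneg_of_mem_CER hz h1
  obtain ⟨m2, hm2, hpsi2⟩ := exists_superset_psi_nonneg_of_mem_CER hz h2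
  obtain ⟨m3, hm3, hpsi3⟩ := exists_superset_psi_nonneg_of_mem_CER hz h3
  have h12 : ev z e1 ≤ ev z (e1 ∩ e2) := ev_anti_of_psi_nonneg z hpsi1 inter_subset_left hm1
  have h13 : ev z e1 ≤ ev z (e1 ∩ e3) := ev_anti_of_psi_nonneg z hpsi1 inter_subset_left hm1
  have h21 : ev z e2 ≤ ev z (e1 ∩ e2) := ev_anti_of_psi_nonneg z hpsi2 inter_subset_right hm2
  have h23 : ev z e2 ≤ ev z (e2 ∩ e3) := ev_anti_of_psi_nonneg z hpsi2 inter_subset_left hm2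
  have h3nonneg : 0 ≤ ev z e3 := ev_nonneg_of_psi_nonneg z hpsi3 hm3
  have hcover : e1 ∩ e3 ∪ e2 ∩ e3 = e3 := by
    rw [← union_inter_distrib_right, inter_eq_right.mpr h3sub]
  have hsuper := ev_add_ev_le_of_psi_nonneg (f := e1 ∩ e3) (g := e2 ∩ e3) z hpsi3
    (inter_subset_right.trans hm3) (inter_subset_right.trans hm3)
  have hle_one : ev z (e1 ∩ e3 ∩ (e2 ∩ e3)) ≤ 1 := ev_empty_eq_one z ▸
    ev_anti_of_psi_nonneg z hpsi3 (empty_subset _)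
      ((inter_subset_left.trans inter_subset_right).trans hm3)
  rw [hcover] at hsuper
  linarith

end CER

theorem stmt19_general {N : Type*} [DecidableEq N] (V : Finset N) (E : Finset (Finset N))
    (e1 e2 e3 : Finset N) (h1 : e1 ∈ E) (h2 : e2 ∈ E) (h3 : e3 ∈ E)
    (hw3 : e3 \ (e1 ∪ e2) = ∅) :
    (∀ z ∈ CER V E,
      -1 ≤ 2 * ev z (e1 ∩ e2) - 2 * ev z e1 - 2 * ev z e2 + 2 * ev z e3) ∧
    ∃ β : ℝ, Int.floor β = 0 ∧ ∀ z ∈ CER V E,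
      ev z e1 + ev z e2 - ev z (e1 ∩ e2) - ev z e3 ≤ β := by
  have key : ∀ z ∈ CER V E,
      -1 ≤ 2 * ev z (e1 ∩ e2) - 2 * ev z e1 - 2 * ev z e2 + 2 * ev z e3 := fun z hz =>
    neg_one_le_two_mul_triangle_of_mem_CER hz h1 h2 h3 (sdiff_eq_empty_iff_subset.mp hw3)
  refine ⟨key, 1 / 2, by norm_num [Int.floor_eq_zero_iff], fun z hz => ?_⟩
  linarith [key z hz]

theorem stmt19 {N : Type*} [DecidableEq N] (V : Finset N) (E : Finset (Finset N))
    (hcard : ∀ e ∈ E, 2 ≤ e.card) (hVsub : ∀ e ∈ E, e ⊆ V)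
    (hcover : ∀ v ∈ V, ∃ e ∈ E, v ∈ e)
    (hcl : clE E = E)
    (e1 e2 e3 : Finset N) (h1 : e1 ∈ E) (h2 : e2 ∈ E) (h3 : e3 ∈ E)
    (hd12 : (e1 \ e2).Nonempty) (hd21 : (e2 \ e1).Nonempty)
    (hd13 : (e1 \ e3).Nonempty) (hd31 : (e3 \ e1).Nonempty)
    (hd23 : (e2 \ e3).Nonempty) (hd32 : (e3 \ e2).Nonempty)
    (halpha : ∀ e ∈ E, (((e1 ∩ e2) ∪ (e2 ∩ e3) ∪ (e1 ∩ e3)) \ e).Nonempty)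
    (hw1 : e1 \ (e2 ∪ e3) = ∅) (hw2 : e2 \ (e1 ∪ e3) = ∅)
    (hw3 : e3 \ (e1 ∪ e2) = ∅) :
    (∀ z ∈ CER V E,
      -1 ≤ 2 * ev z (e1 ∩ e2) - 2 * ev z e1 - 2 * ev z e2 + 2 * ev z e3) ∧
    ∃ β : ℝ, Int.floor β = 0 ∧ ∀ z ∈ CER V E,
      ev z e1 + ev z e2 - ev z (e1 ∩ e2) - ev z e3 ≤ β :=
  stmt19_general V E e1 e2 e3 h1 h2 h3 hw3

end BPO
end
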